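/- For every site r : Fin L, the same-site mixed anticommutators give disorder operators: ã(r)a†(r) + a†(r)ã(r) equals the diagonal operator sending |f⟩ to q^{Σ_t ε(t−r) f(t)} |f⟩ (that is, q^{Σ_t ε(t−r) n(t)}), and ã†(r)a(r) + a(r)ã†(r) equals the diagonal operator sending |f⟩ to q^{−Σ_t ε(t−r) f(t)} |f⟩. -/
import Mathlib


/-!
Anyonic oscillators on a one-dimensional lattice `Fin L`, built from fermionic
oscillators on the fermionic Fock space `(Fin L → Bool) →₀ ℂ` and disorder factors.
-/

noncomputable section

/-- The fermionic Fock space on a lattice of `L` sites. -/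
abbrev FSpace (L : ℕ) : Type := (Fin L → Bool) →₀ ℂ

/-- The Jordan–Wigner sign `(−1)^{#{t < r : f t = true}}`. -/
def fSign {L : ℕ} (f : Fin L → Bool) (r : Fin L) : ℂ :=
  (-1 : ℂ) ^ (Finset.univ.filter fun t => t < r ∧ f t = true).card

/-- The fermionic annihilation operator `c(r)`. -/
def cAnn {L : ℕ} (r : Fin L) : Module.End ℂ (FSpace L) :=
  Finsupp.lift (FSpace L) ℂ (Fin L → Bool) fun f =>
    if f r = true then fSign f r • Finsupp.single (Function.update f r false) (1 : ℂ) else 0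

/-- The fermionic creation operator `c†(r)`. -/
def cCre {L : ℕ} (r : Fin L) : Module.End ℂ (FSpace L) :=
  Finsupp.lift (FSpace L) ℂ (Fin L → Bool) fun f =>
    if f r = false then fSign f r • Finsupp.single (Function.update f r true) (1 : ℂ) else 0

/-- The number operator `n(r) : |f⟩ ↦ f(r)·|f⟩`. -/
def nOp {L : ℕ} (r : Fin L) : Module.End ℂ (FSpace L) :=
  Finsupp.lift (FSpace L) ℂ (Fin L → Bool) fun f =>
    (if f r = true then (1 : ℂ) else 0) • Finsupp.single f (1 : ℂ)

/-- The exponent `Σ_t ε(t−r) f(t)`, where `ε` is the sign function. -/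
def fExp {L : ℕ} (r : Fin L) (f : Fin L → Bool) : ℤ :=
  ∑ t : Fin L, Int.sign (((t : ℕ) : ℤ) - ((r : ℕ) : ℤ)) * (if f t = true then 1 else 0)

/-- The disorder operator `K⁺(r) : |f⟩ ↦ p^{Σ_t ε(t−r) f(t)} |f⟩`. -/
def Kplus {L : ℕ} (p : ℂ) (r : Fin L) : Module.End ℂ (FSpace L) :=
  Finsupp.lift (FSpace L) ℂ (Fin L → Bool) fun f =>
    (p ^ fExp r f) • Finsupp.single f (1 : ℂ)

/-- The disorder operator `K⁻(r) : |f⟩ ↦ p^{−Σ_t ε(t−r) f(t)} |f⟩`. -/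
def Kminus {L : ℕ} (p : ℂ) (r : Fin L) : Module.End ℂ (FSpace L) :=
  Finsupp.lift (FSpace L) ℂ (Fin L → Bool) fun f =>
    (p ^ (-fExp r f)) • Finsupp.single f (1 : ℂ)

/-- The anyonic oscillator `a(r) = K⁻(r) ∘ c(r)`. -/
def aAnn {L : ℕ} (p : ℂ) (r : Fin L) : Module.End ℂ (FSpace L) := Kminus p r * cAnn r

/-- The anyonic oscillator `a†(r) = K⁺(r) ∘ c†(r)`. -/
def aCre {L : ℕ} (p : ℂ) (r : Fin L) : Module.End ℂ (FSpace L) := Kplus p r * cCre r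

/-- The anyonic oscillator `ã(r) = K⁺(r) ∘ c(r)`. -/
def taAnn {L : ℕ} (p : ℂ) (r : Fin L) : Module.End ℂ (FSpace L) := Kplus p r * cAnn r

/-- The anyonic oscillator `ã†(r) = K⁻(r) ∘ c†(r)`. -/
def taCre {L : ℕ} (p : ℂ) (r : Fin L) : Module.End ℂ (FSpace L) := Kminus p r * cCre r

/-- The diagonal operator `|f⟩ ↦ q^{σ·Σ_t ε(t−r) f(t)} |f⟩`. -/
def Qdiag {L : ℕ} (q : ℂ) (σ : ℤ) (r : Fin L) : Module.End ℂ (FSpace L) :=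
  Finsupp.lift (FSpace L) ℂ (Fin L → Bool) fun f =>
    (q ^ (σ * fExp r f)) • Finsupp.single f (1 : ℂ)


section Aux
variable {L : ℕ}

lemma lift_single (g : (Fin L → Bool) → FSpace L) (f : Fin L → Bool) :
    Finsupp.lift (FSpace L) ℂ (Fin L → Bool) g (Finsupp.single f 1) = g f := by
  simp [Finsupp.lift_apply, Finsupp.sum_single_index]

lemma fSign_update (f : Fin L → Bool) (r : Fin L) (b : Bool) :
    fSign (Function.update f r b) r = fSign f r := by
  unfold fSign
  congr 2
  ext t
  by_cases h : t = r
  · subst h; simp [lt_irrefl]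
  · simp [Function.update_of_ne h]

lemma fExp_update (f : Fin L → Bool) (r : Fin L) (b : Bool) :
    fExp r (Function.update f r b) = fExp r f := by
  unfold fExp
  apply Finset.sum_congr rfl
  intro t _
  by_cases h : t = r
  · subst h; simp
  · rw [Function.update_of_ne h]

lemma fSign_sq (f : Fin L → Bool) (r : Fin L) : fSign f r * fSign f r = 1 := by
  unfold fSign
  rw [← mul_pow, neg_mul_neg, one_mul, one_pow]

lemma cAnn_single (r : Fin L) (f : Fin L → Bool) :
    cAnn r (Finsupp.single f 1) =
      if f r = true then fSign f r • Finsupp.single (Function.update f r false) (1 : ℂ)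
      else 0 := lift_single _ f

lemma cCre_single (r : Fin L) (f : Fin L → Bool) :
    cCre r (Finsupp.single f 1) =
      if f r = false then fSign f r • Finsupp.single (Function.update f r true) (1 : ℂ)
      else 0 := lift_single _ f

lemma Kplus_single (p : ℂ) (r : Fin L) (f : Fin L → Bool) :
    Kplus p r (Finsupp.single f 1) = (p ^ fExp r f) • Finsupp.single f (1 : ℂ) :=
  lift_single _ f

lemma Kminus_single (p : ℂ) (r : Fin L) (f : Fin L → Bool) :
    Kminus p r (Finsupp.single f 1) = (p ^ (-fExp r f)) • Finsupp.single f (1 : ℂ) :=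
  lift_single _ f

lemma Qdiag_single (q : ℂ) (σ : ℤ) (r : Fin L) (f : Fin L → Bool) :
    Qdiag q σ r (Finsupp.single f 1) = (q ^ (σ * fExp r f)) • Finsupp.single f (1 : ℂ) :=
  lift_single _ f

lemma update_self_of_eq (f : Fin L → Bool) (r : Fin L) {b : Bool} (h : f r = b) :
    Function.update f r b = f := by
  funext t
  by_cases ht : t = r
  · subst ht; simp [h]
  · simp [Function.update_of_ne ht]

end Aux

/-- same-site mixed anticommutators give disorder operators. -/
theorem anyon_same_site_mixed (L : ℕ) (hL : 1 ≤ L) (p : ℂ) (hp : p ≠ 0)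
    (q : ℂ) (hq : q = p ^ 2) (r : Fin L) :
    taAnn p r * aCre p r + aCre p r * taAnn p r = Qdiag q 1 r ∧
    taCre p r * aAnn p r + aAnn p r * taCre p r = Qdiag q (-1) r := by
  have hsingle : ∀ (f : Fin L → Bool) (b : ℂ),
      (Finsupp.single f b : FSpace L) = b • Finsupp.single f 1 := by
    intro f b; rw [Finsupp.smul_single', mul_one]
  constructor
  · apply Finsupp.lhom_ext
    intro f b
    rw [hsingle f b, map_smul, map_smul]
    congr 1
    rw [LinearMap.add_apply]
    simp only [taAnn, aCre, Module.End.mul_apply]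
    rw [Qdiag_single]
    by_cases h : f r = true
    · have hupd : Function.update f r true = f := update_self_of_eq f r h
      simp only [cAnn_single, cCre_single, h, Bool.true_eq_false, if_false, if_true,
        map_zero, map_smul, zero_add, Kplus_single, Function.update_self,
        Bool.false_eq_true, fSign_update, fExp_update, Function.update_idem, hupd,
        smul_smul]
      congr 1
      have hq' : q ^ (1 * fExp r f) = p ^ fExp r f * p ^ fExp r f := by
        rw [one_mul, hq, sq, mul_zpow]
      calc fSign f r * p ^ fExp r f * fSign f r * p ^ fExp r f
          = (fSign f r * fSign f r) * (p ^ fExp r f * p ^ fExp r f) := by ring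
        _ = q ^ (1 * fExp r f) := by rw [fSign_sq, one_mul, hq']
    · have hf : f r = false := by simpa using h
      have hupd : Function.update f r false = f := update_self_of_eq f r hf
      simp only [cAnn_single, cCre_single, h, hf, Bool.false_eq_true, if_false, if_true,
        map_zero, map_smul, add_zero, smul_zero, Kplus_single, Function.update_self,
        fSign_update, fExp_update, Function.update_idem, hupd, smul_smul]
      congr 1
      have hq' : q ^ (1 * fExp r f) = p ^ fExp r f * p ^ fExp r f := by
        rw [one_mul, hq, sq, mul_zpow]
      calc fSign f r * p ^ fExp r f * fSign f r * p ^ fExp r f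
          = (fSign f r * fSign f r) * (p ^ fExp r f * p ^ fExp r f) := by ring
        _ = q ^ (1 * fExp r f) := by rw [fSign_sq, one_mul, hq']
  · apply Finsupp.lhom_ext
    intro f b
    rw [hsingle f b, map_smul, map_smul]
    congr 1
    rw [LinearMap.add_apply]
    simp only [taCre, aAnn, Module.End.mul_apply]
    rw [Qdiag_single]
    have hq' : q ^ (-1 * fExp r f) = p ^ (-fExp r f) * p ^ (-fExp r f) := by
      rw [neg_one_mul, hq, sq, mul_zpow]
    by_cases h : f r = true
    · have hupd : Function.update f r true = f := update_self_of_eq f r h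
      simp only [cAnn_single, cCre_single, h, Bool.true_eq_false, if_false, if_true,
        map_zero, map_smul, zero_add, add_zero, Kminus_single, Function.update_self,
        Bool.false_eq_true, fSign_update, fExp_update, Function.update_idem, hupd,
        smul_smul]
      congr 1
      calc fSign f r * p ^ (-fExp r f) * fSign f r * p ^ (-fExp r f)
          = (fSign f r * fSign f r) * (p ^ (-fExp r f) * p ^ (-fExp r f)) := by ring
        _ = q ^ (-1 * fExp r f) := by rw [fSign_sq, one_mul, hq']
    · have hf : f r = false := by simpa using h
      have hupd : Function.update f r false = f := update_self_of_eq f r hf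
      simp only [cAnn_single, cCre_single, h, hf, Bool.false_eq_true, if_false, if_true,
        map_zero, map_smul, add_zero, zero_add, smul_zero, Kminus_single,
        Function.update_self, fSign_update, fExp_update, Function.update_idem, hupd,
        smul_smul]
      congr 1
      calc fSign f r * p ^ (-fExp r f) * fSign f r * p ^ (-fExp r f)
          = (fSign f r * fSign f r) * (p ^ (-fExp r f) * p ^ (-fExp r f)) := by ring
        _ = q ^ (-1 * fExp r f) := by rw [fSign_sq, one_mul, hq']


end
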